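/- arXiv:2302.04545 — 2 statements merged into one kernel-verified Lean document; each statement's English description precedes it below -/
import Mathlib

section
/- Let x ∈ H^n be a point on the hyperboloid of curvature -1/C (C > 0), let W be any real n × (n+1) matrix and v ∈ ℝ^{1×(n+1)} a row vector with vᵀx ≠ 0. Define the (n+1) × (n+1) matrix f whose first row is (sqrt(‖Wx‖² + C) / (v·x)) · v and whose remaining n rows are W. Then f·x lies on H^n, i.e., ⟨f·x, f·x⟩_L = -C and the first coordinate of f·x is positive. -/
/-! The first row is rescaled so that its pairing with `x` is exactly `√(‖W x‖² + C)`, which is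
the time coordinate forced on a point of `H^n` with spatial part `W x`. -/

open Matrix BigOperators

noncomputable def lprod {n : ℕ} (x y : Fin (n+1) → ℝ) : ℝ :=
  -(x 0 * y 0) + ∑ i : Fin n, x i.succ * y i.succ

def Hyp (n : ℕ) (C : ℝ) : Set (Fin (n+1) → ℝ) :=
  {x | lprod x x = -C ∧ 0 < x 0}

noncomputable def arcosh (t : ℝ) : ℝ := Real.log (t + Real.sqrt (t^2 - 1))

noncomputable def dL {n : ℕ} (C : ℝ) (x y : Fin (n+1) → ℝ) : ℝ :=
  Real.sqrt C * arcosh (-(lprod x y) / C)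

def gL (n : ℕ) : Matrix (Fin (n+1)) (Fin (n+1)) ℝ :=
  Matrix.diagonal (fun i => if i = 0 then -1 else 1)

noncomputable def boost (n : ℕ) (α : ℝ) : Matrix (Fin (n+1)) (Fin (n+1)) ℝ :=
  Matrix.of fun i j =>
    if i = 0 ∧ j = 0 then Real.cosh α
    else if (i = 0 ∧ j = 1) ∨ (i = 1 ∧ j = 0) then Real.sinh α
    else if i = 1 ∧ j = 1 then Real.cosh α
    else if i = j then 1 else 0

def srot {n : ℕ} (R : Matrix (Fin n) (Fin n) ℝ) : Matrix (Fin (n+1)) (Fin (n+1)) ℝ :=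
  Matrix.of fun i j =>
    if hi : i = 0 then (if j = 0 then 1 else 0)
    else if hj : j = 0 then 0 else R (i.pred hi) (j.pred hj)

theorem of_dite_pred_mulVec {α ι : Type*} [NonUnitalNonAssocSemiring α] [Fintype ι] {n : ℕ}
    (r : ι → α) (W : Matrix (Fin n) ι α) (x : ι → α) :
    of (fun i j => if h : i = 0 then r j else W (i.pred h) j) *ᵥ x = vecCons (r ⬝ᵥ x) (W *ᵥ x) := by
  ext i
  cases i using Fin.cases <;> rfl

theorem lprod_vecCons {n : ℕ} (a b : ℝ) (u w : Fin n → ℝ) :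
    lprod (vecCons a u) (vecCons b w) = -(a * b) + u ⬝ᵥ w := by
  simp only [lprod, cons_val_zero, cons_val_succ, dotProduct]

theorem vecCons_sqrt_mem_Hyp {n : ℕ} {C : ℝ} (hC : 0 < C) (u : Fin n → ℝ) :
    vecCons (√(∑ k, u k ^ 2 + C)) u ∈ Hyp n C := by
  have hpos : 0 < ∑ k, u k ^ 2 + C := by positivity
  refine ⟨?_, by simpa only [cons_val_zero, Real.sqrt_pos] using hpos⟩
  rw [lprod_vecCons, ← sq, Real.sq_sqrt hpos.le]
  simp only [dotProduct, ← sq]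
  ring

theorem stmt3_general {n : ℕ} {C : ℝ} (hC : 0 < C) (x : Fin (n+1) → ℝ)
    (W : Matrix (Fin n) (Fin (n+1)) ℝ) (v : Fin (n+1) → ℝ) (hv : v ⬝ᵥ x ≠ 0) :
    (Matrix.of (fun i j =>
      if h : i = 0 then (Real.sqrt ((∑ k : Fin n, (W.mulVec x k)^2) + C) / (v ⬝ᵥ x)) * v j
      else W (i.pred h) j) : Matrix (Fin (n+1)) (Fin (n+1)) ℝ).mulVec x ∈ Hyp n C := by
  set c := √(∑ k, (W *ᵥ x) k ^ 2 + C)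
  have hrow : (fun j => c / (v ⬝ᵥ x) * v j) ⬝ᵥ x = c := by
    change (c / (v ⬝ᵥ x)) • v ⬝ᵥ x = c
    rw [smul_dotProduct, smul_eq_mul, div_mul_cancel₀ _ hv]
  rw [of_dite_pred_mulVec, hrow]
  exact vecCons_sqrt_mem_Hyp hC (W *ᵥ x)

theorem stmt3 {n : ℕ} {C : ℝ} (hC : 0 < C) (x : Fin (n+1) → ℝ) (hx : x ∈ Hyp n C)
    (W : Matrix (Fin n) (Fin (n+1)) ℝ) (v : Fin (n+1) → ℝ) (hv : v ⬝ᵥ x ≠ 0) :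
    (Matrix.of (fun i j =>
      if h : i = 0 then (Real.sqrt ((∑ k : Fin n, (W.mulVec x k)^2) + C) / (v ⬝ᵥ x)) * v j
      else W (i.pred h) j) : Matrix (Fin (n+1)) (Fin (n+1)) ℝ).mulVec x ∈ Hyp n C :=
  stmt3_general hC x W v hv
end

section
/- The hyperbolic-distance centroid optimization arg min over μ ∈ H^n of Σ_j a_j d_L(μ, x_j), when d_L²-weighted (i.e., minimizing Σ_j a_j · (-⟨μ, x_j⟩_L)), is attained at μ* = sqrt(C) · (Σ_j a_j x_j) / sqrt(-⟨Σ_j a_j x_j, Σ_j a_j x_j⟩_L), for points x_j ∈ H^n and positive weights a_j. -/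
open Matrix BigOperators

lemma lprod_comm {n : ℕ} (x y : Fin (n+1) → ℝ) : lprod x y = lprod y x := by
  unfold lprod; congr 1; · ring
  · exact Finset.sum_congr rfl fun i _ => mul_comm _ _

lemma lprod_smul_left {n : ℕ} (c : ℝ) (x y : Fin (n+1) → ℝ) :
    lprod (c • x) y = c * lprod x y := by
  unfold lprod
  simp only [Pi.smul_apply, smul_eq_mul, mul_add, Finset.mul_sum]
  ring_nf

lemma lprod_smul_right {n : ℕ} (c : ℝ) (x y : Fin (n+1) → ℝ) :
    lprod x (c • y) = c * lprod x y := by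
  rw [lprod_comm, lprod_smul_left, lprod_comm]

lemma lprod_sum_left {n N : ℕ} (f : Fin N → Fin (n+1) → ℝ) (y : Fin (n+1) → ℝ) :
    lprod (∑ j, f j) y = ∑ j, lprod (f j) y := by
  unfold lprod
  simp only [Finset.sum_apply, Finset.sum_mul, ← Finset.sum_neg_distrib]
  rw [Finset.sum_comm, ← Finset.sum_add_distrib]

lemma lprod_sum_right {n N : ℕ} (f : Fin N → Fin (n+1) → ℝ) (y : Fin (n+1) → ℝ) :
    lprod y (∑ j, f j) = ∑ j, lprod y (f j) := by
  rw [lprod_comm, lprod_sum_left]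
  exact Finset.sum_congr rfl fun j _ => lprod_comm _ _

lemma revCS {n : ℕ} (u v : Fin (n+1) → ℝ) (hu0 : 0 < u 0) (hv0 : 0 < v 0)
    (hu : lprod u u ≤ 0) (hv : lprod v v ≤ 0) :
    Real.sqrt (-(lprod u u)) * Real.sqrt (-(lprod v v)) ≤ -(lprod u v) := by
  set P := ∑ i : Fin n, u i.succ * u i.succ with hPdef
  set Q := ∑ i : Fin n, v i.succ * v i.succ with hQdef
  set R := ∑ i : Fin n, u i.succ * v i.succ with hRdef
  have hP : 0 ≤ P := Finset.sum_nonneg fun i _ => mul_self_nonneg _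
  have hQ : 0 ≤ Q := Finset.sum_nonneg fun i _ => mul_self_nonneg _
  have hCS : R ^ 2 ≤ P * Q := by
    have := Finset.sum_mul_sq_le_sq_mul_sq Finset.univ (fun i : Fin n => u i.succ)
      (fun i : Fin n => v i.succ)
    simpa [hPdef, hQdef, hRdef, sq] using this
  have huu : lprod u u = -(u 0 * u 0) + P := rfl
  have hvv : lprod v v = -(v 0 * v 0) + Q := rfl
  have huv : lprod u v = -(u 0 * v 0) + R := rfl
  have hPa : P ≤ u 0 * u 0 := by nlinarith [hu, huu]
  have hQb : Q ≤ v 0 * v 0 := by nlinarith [hv, hvv]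
  have hRle : R ≤ Real.sqrt P * Real.sqrt Q := by
    have h1 : Real.sqrt (R ^ 2) ≤ Real.sqrt (P * Q) := Real.sqrt_le_sqrt hCS
    rw [Real.sqrt_mul hP] at h1
    calc R ≤ |R| := le_abs_self R
      _ = Real.sqrt (R ^ 2) := (Real.sqrt_sq_eq_abs R).symm
      _ ≤ _ := h1
  set p := Real.sqrt P
  set q := Real.sqrt Q
  have hp2 : p ^ 2 = P := Real.sq_sqrt hP
  have hq2 : q ^ 2 = Q := Real.sq_sqrt hQ
  have hp0 : 0 ≤ p := Real.sqrt_nonneg _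
  have hq0 : 0 ≤ q := Real.sqrt_nonneg _
  have hpa : p ≤ u 0 := by nlinarith
  have hqb : q ≤ v 0 := by nlinarith
  have hkey : Real.sqrt (-(lprod u u)) * Real.sqrt (-(lprod v v)) ≤ u 0 * v 0 - p * q := by
    rw [← Real.sqrt_mul (by linarith)]
    have h2 : (-(lprod u u)) * (-(lprod v v)) ≤ (u 0 * v 0 - p * q) ^ 2 := by
      rw [huu, hvv]; nlinarith [sq_nonneg (u 0 * q - v 0 * p)]
    calc Real.sqrt ((-(lprod u u)) * (-(lprod v v)))
        ≤ Real.sqrt ((u 0 * v 0 - p * q) ^ 2) := Real.sqrt_le_sqrt h2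
      _ = |u 0 * v 0 - p * q| := Real.sqrt_sq_eq_abs _
      _ = u 0 * v 0 - p * q := abs_of_nonneg (by nlinarith)
  calc Real.sqrt (-(lprod u u)) * Real.sqrt (-(lprod v v))
      ≤ u 0 * v 0 - p * q := hkey
    _ ≤ u 0 * v 0 - R := by linarith
    _ = -(lprod u v) := by rw [huv]; ring
theorem stmt6 {n N : ℕ} {C : ℝ} (hC : 0 < C) (hN : 0 < N)
    (x : Fin N → Fin (n+1) → ℝ) (hx : ∀ j, x j ∈ Hyp n C)
    (a : Fin N → ℝ) (ha : ∀ j, 0 < a j) :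
    (Real.sqrt C / Real.sqrt (-(lprod (∑ j, a j • x j) (∑ j, a j • x j)))) • (∑ j, a j • x j)
      ∈ Hyp n C ∧
    ∀ μ ∈ Hyp n C,
      ∑ j, a j * (-(lprod ((Real.sqrt C / Real.sqrt (-(lprod (∑ j, a j • x j) (∑ j, a j • x j)))) • (∑ j, a j • x j)) (x j)))
        ≤ ∑ j, a j * (-(lprod μ (x j))) := by
  have : Nonempty (Fin N) := ⟨⟨0, hN⟩⟩
  set s : Fin (n+1) → ℝ := ∑ j, a j • x j with hsdef
  have hsC : Real.sqrt C * Real.sqrt C = C := Real.mul_self_sqrt hC.le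
  -- pairwise bound
  have hpair : ∀ j k, lprod (x j) (x k) ≤ -C := by
    intro j k
    have h := revCS (x j) (x k) (hx j).2 (hx k).2
      (by rw [(hx j).1]; linarith) (by rw [(hx k).1]; linarith)
    rw [(hx j).1, (hx k).1, neg_neg, hsC] at h
    linarith
  -- s 0 positive
  have hs0 : 0 < s 0 := by
    rw [hsdef]
    simp only [Finset.sum_apply, Pi.smul_apply, smul_eq_mul]
    exact Finset.sum_pos (fun j _ => mul_pos (ha j) (hx j).2) Finset.univ_nonempty
  -- expansion of lprod with s
  have hexp : ∀ y, lprod y s = ∑ k, a k * lprod y (x k) := by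
    intro y
    rw [hsdef, lprod_sum_right]
    exact Finset.sum_congr rfl fun k _ => lprod_smul_right _ _ _
  have hA : 0 < ∑ k, a k := Finset.sum_pos (fun k _ => ha k) Finset.univ_nonempty
  -- lprod s s negative
  have hss : lprod s s ≤ -C * (∑ k, a k) * (∑ k, a k) := by
    have h1 : lprod s s = ∑ j, a j * lprod (x j) s := by
      rw [hsdef, lprod_sum_left]
      exact Finset.sum_congr rfl fun j _ => lprod_smul_left _ _ _
    rw [h1]
    calc ∑ j, a j * lprod (x j) s ≤ ∑ j, a j * (-C * (∑ k, a k)) := by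
          apply Finset.sum_le_sum
          intro j _
          apply mul_le_mul_of_nonneg_left _ (ha j).le
          rw [hexp]
          calc ∑ k, a k * lprod (x j) (x k) ≤ ∑ k, a k * (-C) :=
                Finset.sum_le_sum fun k _ =>
                  mul_le_mul_of_nonneg_left (hpair j k) (ha k).le
            _ = -C * (∑ k, a k) := by rw [← Finset.sum_mul]; ring
      _ = -C * (∑ k, a k) * (∑ k, a k) := by rw [← Finset.sum_mul]; ring
  have hssneg : lprod s s < 0 := lt_of_le_of_lt hss (by nlinarith [mul_pos hA hA])
  set L : ℝ := Real.sqrt (-(lprod s s)) with hLdef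
  have hL : 0 < L := Real.sqrt_pos.2 (by linarith)
  have hL2 : L * L = -(lprod s s) := Real.mul_self_sqrt (by linarith)
  set c : ℝ := Real.sqrt C / L with hcdef
  have hc : 0 < c := div_pos (Real.sqrt_pos.2 hC) hL
  have hmem : c • s ∈ Hyp n C := by
    constructor
    · rw [lprod_smul_left, lprod_smul_right, hcdef]
      field_simp
      nlinarith
    · show 0 < c * s 0
      exact mul_pos hc hs0
  refine ⟨hmem, ?_⟩
  intro μ hμ
  have hobj : ∀ y : Fin (n+1) → ℝ, ∑ j, a j * (-(lprod y (x j))) = -(lprod y s) := by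
    intro y
    rw [hexp]
    rw [← Finset.sum_neg_distrib]
    exact Finset.sum_congr rfl fun j _ => by ring
  rw [hobj, hobj]
  -- value at μ*
  have hval : -(lprod (c • s) s) = Real.sqrt C * L := by
    rw [lprod_smul_left, hcdef]
    field_simp
    rw [sq, hL2]
  rw [hval]
  -- lower bound for μ
  have h := revCS μ s hμ.2 hs0 (by rw [hμ.1]; linarith) hssneg.le
  rw [hμ.1, neg_neg, ← hLdef] at h
  exact h
end
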